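/- (Finite U when X⋄ meets the interior of C) If X⋄ ∩ int C ≠ ∅, then: (i) every x⋄ ∈ X⋄ ∩ int C satisfies Ψ^H x⋄ = 0, so N(Ψ^H) ∩ C ≠ ∅; (ii) ∇L(x⋄) ∈ Re(R(Ψ)) = {Re(Ψ w) : w ∈ ℂ^{p'}} for every x⋄ ∈ X⋄ ∩ int C; and (iii) U is finite, i.e., there exists u ≥ 0 with X_u ∩ Q ≠ ∅. -/

import Mathlib

open Matrix
open scoped RealInnerProductSpace ENNReal

noncomputable section

def cnorm1 {n : ℕ} (z : Fin n → ℂ) : ℝ := ∑ j, ‖z j‖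

noncomputable def cnormInf {n : ℕ} (z : Fin n → ℂ) : ℝ := ⨆ j, ‖z j‖

def psiH {p p' : ℕ} (Ψ : Matrix (Fin p) (Fin p') ℂ) (x : EuclideanSpace ℝ (Fin p)) :
    Fin p' → ℂ :=
  Matrix.mulVec Ψᴴ fun i => (x i : ℂ)

def rePsi {p p' : ℕ} (Ψ : Matrix (Fin p) (Fin p') ℂ) (w : Fin p' → ℂ) :
    EuclideanSpace ℝ (Fin p) :=
  WithLp.toLp 2 (fun i => (Matrix.mulVec Ψ w i).re)

def Gset {n : ℕ} (s : Fin n → ℂ) : Set (Fin n → ℂ) :=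
  {w | ∀ j, ‖w j‖ ≤ 1 ∧ (s j ≠ 0 → w j = s j / (‖s j‖ : ℂ))}

def normalCone {p : ℕ} (C : Set (EuclideanSpace ℝ (Fin p))) (x : EuclideanSpace ℝ (Fin p)) :
    Set (EuclideanSpace ℝ (Fin p)) :=
  {a | ∀ y ∈ C, ⟪a, y - x⟫ ≤ 0}

def XuSet {p p' : ℕ} (C : Set (EuclideanSpace ℝ (Fin p))) (L : EuclideanSpace ℝ (Fin p) → ℝ)
    (Ψ : Matrix (Fin p) (Fin p') ℂ) (u : ℝ) : Set (EuclideanSpace ℝ (Fin p)) :=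
  {x ∈ C | ∀ χ ∈ C, L x + u * cnorm1 (psiH Ψ x) ≤ L χ + u * cnorm1 (psiH Ψ χ)}

def QSet {p p' : ℕ} (C : Set (EuclideanSpace ℝ (Fin p))) (Ψ : Matrix (Fin p) (Fin p') ℂ) :
    Set (EuclideanSpace ℝ (Fin p)) :=
  {x ∈ C | ∀ χ ∈ C, cnorm1 (psiH Ψ x) ≤ cnorm1 (psiH Ψ χ)}

def XdSet {p p' : ℕ} (C : Set (EuclideanSpace ℝ (Fin p))) (L : EuclideanSpace ℝ (Fin p) → ℝ)
    (Ψ : Matrix (Fin p) (Fin p') ℂ) : Set (EuclideanSpace ℝ (Fin p)) :=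
  {x ∈ QSet C Ψ | ∀ χ ∈ QSet C Ψ, L x ≤ L χ}

def Ubound {p p' : ℕ} (C : Set (EuclideanSpace ℝ (Fin p))) (L : EuclideanSpace ℝ (Fin p) → ℝ)
    (Ψ : Matrix (Fin p) (Fin p') ℂ) : ℝ≥0∞ :=
  sInf (ENNReal.ofReal '' {u : ℝ | 0 ≤ u ∧ (XuSet C L Ψ u ∩ QSet C Ψ).Nonempty})


/-!
A minimiser `x` of `‖Ψᴴ ·‖₁` over `C` that lies in `int C` sees the points `(1 - t) • x ∈ C`, so
homogeneity of this seminorm forces `Ψᴴ x = 0`. Then every `y ∈ C` with `Ψᴴ (y - x) = 0` lies in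
`Q`, so `x` minimises `L` locally along `N(Ψᴴ)`; hence `∇L(x) ⊥ N(Ψᴴ) = (Re R(Ψ))ᗮ`, i.e.
`∇L(x) = Re (Ψ w)`. Finally convexity gives
`L χ ≥ L x + ⟪Re (Ψ w), χ - x⟫ ≥ L x - ‖w‖₁ ‖Ψᴴ χ‖₁`, so `x ∈ X_u ∩ Q` for `u = ‖w‖₁`.
-/
open Filter Topology

section Gradient

variable {F : Type*} [NormedAddCommGroup F] [InnerProductSpace ℝ F] [CompleteSpace F]
  {f : F → ℝ} {g x : F}

theorem HasGradientAt.hasDerivAt_comp_add_smul (hf : HasGradientAt f g x) (v : F) :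
    HasDerivAt (fun t : ℝ => f (x + t • v)) ⟪g, v⟫ 0 := by
  have hline : HasDerivAt (fun t : ℝ => x + t • v) v 0 := by
    simpa using ((hasDerivAt_id (0 : ℝ)).smul_const v).const_add x
  have h := hf.hasFDerivAt.comp_hasDerivAt_of_eq 0 hline (by simp)
  rwa [InnerProductSpace.toDual_apply_apply] at h

theorem ConvexOn.add_inner_le_of_hasGradientAt {S : Set F} (hfc : ConvexOn ℝ S f)
    (hf : HasGradientAt f g x) {y : F} (hx : x ∈ S) (hy : y ∈ S) :
    f x + ⟪g, y - x⟫ ≤ f y := by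
  have hline : f ∘ AffineMap.lineMap x y = fun t : ℝ => f (x + t • (y - x)) := by
    funext t
    simp [AffineMap.lineMap_apply_module', add_comm]
  have hφc := hfc.comp_affineMap (AffineMap.lineMap x y)
  rw [hline] at hφc
  have h := hφc.le_slope_of_hasDerivAt (x := 0) (y := 1) (by simpa using hx) (by simpa using hy)
    one_pos (hf.hasDerivAt_comp_add_smul (y - x))
  simp only [slope_def_field, one_smul, add_sub_cancel, zero_smul, add_zero, sub_zero, div_one] at h
  linarith

theorem HasGradientAt.mem_orthogonal_of_forall_le {C : Set F} (hf : HasGradientAt f g x)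
    (hx : x ∈ interior C) (K : Submodule ℝ F) (hmin : ∀ y ∈ C, y - x ∈ K → f x ≤ f y) :
    g ∈ Kᗮ := by
  rw [Submodule.mem_orthogonal']
  intro v hv
  have hnear : ∀ᶠ t : ℝ in 𝓝 0, x + t • v ∈ C := by
    have : Tendsto (fun t : ℝ => x + t • v) (𝓝 0) (𝓝 x) := by
      simpa using ((tendsto_id (x := 𝓝 (0 : ℝ))).smul_const v).const_add x
    exact this.eventually (mem_interior_iff_mem_nhds.mp hx)
  have hlocmin : IsLocalMin (fun t : ℝ => f (x + t • v)) 0 := by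
    filter_upwards [hnear] with t ht
    simpa using hmin _ ht (by simpa using K.smul_mem t hv)
  exact hlocmin.hasDerivAt_eq_zero (hf.hasDerivAt_comp_add_smul v)

end Gradient

theorem Seminorm.eq_zero_of_mem_interior_of_forall_le {E : Type*} [SeminormedAddCommGroup E]
    [NormedSpace ℝ E] (s : Seminorm ℝ E) {C : Set E} {x : E} (hx : x ∈ interior C)
    (hmin : ∀ y ∈ C, s x ≤ s y) : s x = 0 := by
  have hnear : ∀ᶠ t : ℝ in 𝓝[>] 0, (1 - t) • x ∈ C ∧ t < 1 := by
    have : Tendsto (fun t : ℝ => (1 - t) • x) (𝓝 0) (𝓝 x) := by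
      simpa using
        ((tendsto_const_nhds (x := (1 : ℝ))).sub (tendsto_id (x := 𝓝 (0 : ℝ)))).smul_const x
    exact nhdsWithin_le_nhds
      ((this.eventually (mem_interior_iff_mem_nhds.mp hx)).and (eventually_lt_nhds one_pos))
  obtain ⟨t, ⟨htC, ht1⟩, ht0⟩ := (hnear.and self_mem_nhdsWithin).exists
  have h := hmin _ htC
  rw [map_smul_eq_mul, Real.norm_of_nonneg (by linarith)] at h
  nlinarith [apply_nonneg s x, ht0]

section PsiH

variable {p p' : ℕ} (Ψ : Matrix (Fin p) (Fin p') ℂ)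

theorem cnorm1_eq_norm_toLp {n : ℕ} (z : Fin n → ℂ) : cnorm1 z = ‖WithLp.toLp 1 z‖ := by
  simp [cnorm1, PiLp.norm_eq_of_L1]

theorem cnorm1_nonneg {n : ℕ} (z : Fin n → ℂ) : 0 ≤ cnorm1 z :=
  cnorm1_eq_norm_toLp z ▸ norm_nonneg _

def psiHₗ : EuclideanSpace ℝ (Fin p) →ₗ[ℝ] Fin p' → ℂ where
  toFun := psiH Ψ
  map_add' x y := by
    simp only [psiH, PiLp.add_apply, Complex.ofReal_add, ← Matrix.mulVec_add]
    rfl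
  map_smul' r x := by
    ext j
    simp [psiH, Matrix.mulVec, dotProduct, Finset.mul_sum, mul_left_comm]

theorem psiH_sub (x y : EuclideanSpace ℝ (Fin p)) : psiH Ψ (x - y) = psiH Ψ x - psiH Ψ y :=
  map_sub (psiHₗ Ψ) x y

def psiHSeminorm : Seminorm ℝ (EuclideanSpace ℝ (Fin p)) :=
  (normSeminorm ℝ (WithLp 1 (Fin p' → ℂ))).comp
    ((WithLp.linearEquiv 1 ℝ (Fin p' → ℂ)).symm.toLinearMap ∘ₗ psiHₗ Ψ)

theorem psiHSeminorm_apply (x : EuclideanSpace ℝ (Fin p)) :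
    psiHSeminorm Ψ x = cnorm1 (psiH Ψ x) :=
  (cnorm1_eq_norm_toLp _).symm

theorem psiH_eq_zero_of_mem_QSet_of_mem_interior {C : Set (EuclideanSpace ℝ (Fin p))}
    {x : EuclideanSpace ℝ (Fin p)} (hxQ : x ∈ QSet C Ψ) (hx : x ∈ interior C) :
    psiH Ψ x = 0 := by
  have h := (psiHSeminorm Ψ).eq_zero_of_mem_interior_of_forall_le hx
    (by simpa only [psiHSeminorm_apply] using hxQ.2)
  rw [psiHSeminorm_apply, cnorm1_eq_norm_toLp, norm_eq_zero] at h
  simpa using h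

theorem mem_QSet_of_psiH_eq_zero {C : Set (EuclideanSpace ℝ (Fin p))}
    {x : EuclideanSpace ℝ (Fin p)} (hxC : x ∈ C) (hx : psiH Ψ x = 0) : x ∈ QSet C Ψ :=
  ⟨hxC, fun χ _ => by simpa [hx, cnorm1] using cnorm1_nonneg (psiH Ψ χ)⟩

end PsiH

section RePsi

variable {p p' : ℕ} (Ψ : Matrix (Fin p) (Fin p') ℂ)

theorem inner_rePsi (w : Fin p' → ℂ) (x : EuclideanSpace ℝ (Fin p)) :
    ⟪rePsi Ψ w, x⟫ = (∑ j, w j * starRingEnd ℂ (psiH Ψ x j)).re := by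
  simp only [PiLp.inner_apply, RCLike.inner_apply, conj_trivial, rePsi, psiH, Matrix.mulVec,
    dotProduct, Matrix.conjTranspose_apply, map_sum, map_mul, Complex.conj_ofReal, Finset.mul_sum,
    Complex.re_sum]
  rw [Finset.sum_comm]
  refine Finset.sum_congr rfl fun i _ => Finset.sum_congr rfl fun j _ => ?_
  simp [Complex.mul_re]
  ring

theorem abs_inner_rePsi_le (w : Fin p' → ℂ) (x : EuclideanSpace ℝ (Fin p)) :
    |⟪rePsi Ψ w, x⟫| ≤ cnorm1 w * cnorm1 (psiH Ψ x) := by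
  rw [inner_rePsi, cnorm1, cnorm1, Finset.sum_mul_sum]
  calc |(∑ j, w j * starRingEnd ℂ (psiH Ψ x j)).re|
      ≤ ‖∑ j, w j * starRingEnd ℂ (psiH Ψ x j)‖ := Complex.abs_re_le_norm _
    _ ≤ ∑ j, ‖w j‖ * ‖psiH Ψ x j‖ := by
      simpa using norm_sum_le Finset.univ fun j => w j * starRingEnd ℂ (psiH Ψ x j)
    _ ≤ ∑ i, ∑ j, ‖w i‖ * ‖psiH Ψ x j‖ := by
      rw [Finset.sum_comm]
      exact Finset.sum_le_sum fun j _ => Finset.single_le_sum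
        (f := fun i => ‖w i‖ * ‖psiH Ψ x j‖) (fun _ _ => by positivity) (Finset.mem_univ j)

def rePsiₗ : (Fin p' → ℂ) →ₗ[ℝ] EuclideanSpace ℝ (Fin p) where
  toFun := rePsi Ψ
  map_add' a b := by
    ext i
    simp [rePsi, Matrix.mulVec_add]
  map_smul' r a := by
    ext i
    simp [rePsi, Matrix.mulVec_smul, Complex.real_smul]

theorem mem_orthogonal_range_rePsiₗ_iff (v : EuclideanSpace ℝ (Fin p)) :
    v ∈ (LinearMap.range (rePsiₗ Ψ))ᗮ ↔ psiH Ψ v = 0 := by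
  rw [Submodule.mem_orthogonal]
  constructor
  · intro h
    funext j
    have hj := h _ ⟨Pi.single j (psiH Ψ v j), rfl⟩
    rw [rePsiₗ, LinearMap.coe_mk, AddHom.coe_mk, inner_rePsi,
      Finset.sum_eq_single_of_mem j (Finset.mem_univ j) (by simp +contextual),
      Pi.single_eq_same, Complex.mul_conj, Complex.ofReal_re] at hj
    simpa using hj
  · rintro h _ ⟨w, rfl⟩
    simp [rePsiₗ, inner_rePsi, h]

end RePsi

section Optimality

variable {p p' : ℕ} (Ψ : Matrix (Fin p) (Fin p') ℂ) {C : Set (EuclideanSpace ℝ (Fin p))}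
  {L : EuclideanSpace ℝ (Fin p) → ℝ} {x : EuclideanSpace ℝ (Fin p)}

theorem exists_rePsi_eq_of_mem_XdSet_of_mem_interior {g : EuclideanSpace ℝ (Fin p)}
    (hL : HasGradientAt L g x) (hxd : x ∈ XdSet C L Ψ) (hx : x ∈ interior C) :
    ∃ w, rePsi Ψ w = g := by
  have hx0 := psiH_eq_zero_of_mem_QSet_of_mem_interior Ψ hxd.1 hx
  have hg := hL.mem_orthogonal_of_forall_le hx (LinearMap.range (rePsiₗ Ψ))ᗮ fun y hy hyx => by
    refine hxd.2 y (mem_QSet_of_psiH_eq_zero Ψ hy ?_)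
    simpa [psiH_sub, hx0] using (mem_orthogonal_range_rePsiₗ_iff Ψ _).1 hyx
  rw [Submodule.orthogonal_orthogonal] at hg
  exact hg

theorem mem_XuSet_of_hasGradientAt_rePsi (hL : ConvexOn ℝ C L) {w : Fin p' → ℂ}
    (hgrad : HasGradientAt L (rePsi Ψ w) x) (hxC : x ∈ C) (hx : psiH Ψ x = 0) :
    x ∈ XuSet C L Ψ (cnorm1 w) := by
  refine ⟨hxC, fun χ hχ => ?_⟩
  have hsupport := hL.add_inner_le_of_hasGradientAt hgrad hxC hχ
  have hbound := neg_abs_le ⟪rePsi Ψ w, χ - x⟫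
  have hholder := abs_inner_rePsi_le Ψ w (χ - x)
  rw [psiH_sub, hx, sub_zero] at hholder
  have hx1 : cnorm1 (psiH Ψ x) = 0 := by simp [hx, cnorm1]
  rw [hx1, mul_zero, add_zero]
  linarith

end Optimality

theorem statement_10_general {p p' : ℕ}
    (C : Set (EuclideanSpace ℝ (Fin p)))
    (hCcv : Convex ℝ C)
    (L : EuclideanSpace ℝ (Fin p) → ℝ) (hLcv : ConvexOn ℝ Set.univ L)
    (gradL : EuclideanSpace ℝ (Fin p) → EuclideanSpace ℝ (Fin p))
    (hLd : ∀ x, HasGradientAt L (gradL x) x)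
    (Ψ : Matrix (Fin p) (Fin p') ℂ)
    (hint : (XdSet C L Ψ ∩ interior C).Nonempty) :
    (∀ xd ∈ XdSet C L Ψ ∩ interior C, psiH Ψ xd = 0) ∧
    (∃ x ∈ C, psiH Ψ x = 0) ∧
    (∀ xd ∈ XdSet C L Ψ ∩ interior C, ∃ w : Fin p' → ℂ, rePsi Ψ w = gradL xd) ∧
    (∃ u : ℝ, 0 ≤ u ∧ (XuSet C L Ψ u ∩ QSet C Ψ).Nonempty) := by
  have hzero : ∀ xd ∈ XdSet C L Ψ ∩ interior C, psiH Ψ xd = 0 := fun x hx =>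
    psiH_eq_zero_of_mem_QSet_of_mem_interior Ψ hx.1.1 hx.2
  have hgrad : ∀ xd ∈ XdSet C L Ψ ∩ interior C, ∃ w, rePsi Ψ w = gradL xd := fun x hx =>
    exists_rePsi_eq_of_mem_XdSet_of_mem_interior Ψ (hLd x) hx.1 hx.2
  obtain ⟨x, hx⟩ := hint
  obtain ⟨w, hw⟩ := hgrad x hx
  have hxu : x ∈ XuSet C L Ψ (cnorm1 w) :=
    mem_XuSet_of_hasGradientAt_rePsi Ψ (hLcv.subset (Set.subset_univ C) hCcv) (hw ▸ hLd x)
      hx.1.1.1 (hzero x hx)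
  exact ⟨hzero, ⟨x, hx.1.1.1, hzero x hx⟩, hgrad, cnorm1 w, cnorm1_nonneg w, x, hxu, hx.1.1⟩

theorem statement_10 {p p' : ℕ} (hp : 0 < p) (hp' : 0 < p')
    (C : Set (EuclideanSpace ℝ (Fin p))) (hCne : C.Nonempty) (hCcl : IsClosed C)
    (hCcv : Convex ℝ C)
    (L : EuclideanSpace ℝ (Fin p) → ℝ) (hLcv : ConvexOn ℝ Set.univ L)
    (gradL : EuclideanSpace ℝ (Fin p) → EuclideanSpace ℝ (Fin p))
    (hLd : ∀ x, HasGradientAt L (gradL x) x)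
    (hLb : BddBelow (L '' C))
    (Ψ : Matrix (Fin p) (Fin p') ℂ)
    (hint : (XdSet C L Ψ ∩ interior C).Nonempty) :
    (∀ xd ∈ XdSet C L Ψ ∩ interior C, psiH Ψ xd = 0) ∧
    (∃ x ∈ C, psiH Ψ x = 0) ∧
    (∀ xd ∈ XdSet C L Ψ ∩ interior C, ∃ w : Fin p' → ℂ, rePsi Ψ w = gradL xd) ∧
    (∃ u : ℝ, 0 ≤ u ∧ (XuSet C L Ψ u ∩ QSet C Ψ).Nonempty) :=
  statement_10_general C hCcv L hLcv gradL hLd Ψ hint
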